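/- In the signed random heap process with m columns, suppose heaps H¹ and H² are such that the sets of pieces blocking the highest piece of column 0 in H¹ and in H² have the same configuration (i.e. correspond under a bijection preserving columns and the blocking relation). Then the probability that a run of 0's started from H¹ backtracks equals the probability that a run of 0's started from H² backtracks, and for every future time the probability that the highest piece of column 0 has been annihilated by that time is the same for the process started from H¹ as for the process started from H². -/

import Mathlib

open MeasureTheory ProbabilityTheory Filter
open scoped ENNReal

namespace RandomHeap

/-- A piece of a signed heap: a height (a positive integer), a column in `ZMod m`,
and a sign (`true` for `+`, `false` for `-`). -/
structure Piece (m : ℕ) where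
  height : ℕ
  col : ZMod m
  sign : Bool
deriving DecidableEq

variable {m : ℕ}

instance : MeasurableSpace (ZMod m) := ⊤
instance : MeasurableSpace (Piece m) := ⊤
instance : MeasurableSpace (Finset (Piece m)) := ⊤

/-- The defining conditions for a finite set of pieces to be a signed heap. -/
def IsHeap (H : Finset (Piece m)) : Prop :=
  (∀ p ∈ H, 1 ≤ p.height) ∧
  (∀ p ∈ H, 1 < p.height →
      ∃ q ∈ H, q.height + 1 = p.height ∧
        (q.col = p.col - 1 ∨ q.col = p.col ∨ q.col = p.col + 1)) ∧
  (∀ p ∈ H, ∀ q ∈ H, p.height = q.height + 1 → p.col = q.col → p.sign = q.sign) ∧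
  (∀ p ∈ H, ∀ q ∈ H, q.col = p.col + 1 → p.height ≠ q.height) ∧
  (∀ p ∈ H, ∀ q ∈ H, p.height = q.height → p.col = q.col → p = q)

/-- The height of the highest piece in column `j` (0 if the column is empty). -/
def colHeight (H : Finset (Piece m)) (j : ZMod m) : ℕ :=
  (H.filter fun p => p.col = j).sup Piece.height

/-- The roof of a heap: the set of removable pieces, i.e. pieces having no piece of
greater height in their own column or either adjacent column. -/
def roof (H : Finset (Piece m)) : Finset (Piece m) :=
  H.filter fun p => ∀ q ∈ H,
    (q.col = p.col - 1 ∨ q.col = p.col ∨ q.col = p.col + 1) → q.height ≤ p.height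

open scoped Classical in
/-- One step of the signed random heap dynamics: given the draw `d = (k, s)`, if the top
piece of column `k` is strictly higher than both neighbouring columns and has sign `!s`,
it is annihilated; otherwise the piece `(max (h_{k-1}, h_k, h_{k+1}) + 1, k, s)` is added. -/
noncomputable def step (H : Finset (Piece m)) (d : ZMod m × Bool) : Finset (Piece m) :=
  if max (colHeight H (d.1 - 1)) (colHeight H (d.1 + 1)) < colHeight H d.1 ∧
      (⟨colHeight H d.1, d.1, !d.2⟩ : Piece m) ∈ H then
    H.erase ⟨colHeight H d.1, d.1, !d.2⟩
  else
    insert ⟨max (colHeight H d.1) (max (colHeight H (d.1 - 1)) (colHeight H (d.1 + 1))) + 1,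
      d.1, d.2⟩ H

/-- The heap process started from `H₀` and driven by the sequence of draws `ω`. -/
noncomputable def walk (H₀ : Finset (Piece m)) (ω : ℕ → ZMod m × Bool) : ℕ → Finset (Piece m)
  | 0 => H₀
  | n + 1 => step (walk H₀ ω n) (ω n)

/-- The roof of `H` contains a piece in column `0`. -/
def hasRoofPiece0 (H : Finset (Piece m)) : Prop := ∃ p ∈ roof H, p.col = 0

/-- The draws `U` form an i.i.d. sequence, uniform over the `2 * m` possible
(column, sign) pairs. -/
def IIDUniformDraws {Ω : Type*} [MeasurableSpace Ω] (P : Measure Ω)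
    (U : ℕ → Ω → ZMod m × Bool) : Prop :=
  (∀ n, Measurable (U n)) ∧
  iIndepFun U P ∧
  ∀ n d, P {ω | U n ω = d} = ((2 * m : ℕ) : ℝ≥0∞)⁻¹

end RandomHeap

open RandomHeap

namespace RandomHeap

variable {m : ℕ}

/-- `a` directly covers `b` in the heap `H`: both belong to `H`, `a` is strictly higher
than `b`, and `a` lies in the same column as `b` or in an adjacent one. -/
def Covers (H : Finset (Piece m)) (a b : Piece m) : Prop :=
  a ∈ H ∧ b ∈ H ∧ b.height < a.height ∧
    (a.col = b.col - 1 ∨ a.col = b.col ∨ a.col = b.col + 1)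

/-- `a` blocks `b` in the heap `H`: `a` must be annihilated before `b` can become
removable, i.e. `a` is related to `b` by a chain of direct coverings. -/
def Blocks (H : Finset (Piece m)) (a b : Piece m) : Prop :=
  Relation.TransGen (Covers H) a b

end RandomHeap

/-!
The two processes are coupled draw by draw: a draw `(k, s)` for the first heap is matched with
`(k, s')` for the second, where `s'` differs from `s` exactly when the top pieces of column `k`
in the two current heaps have different signs. Then the draw annihilates the top of column `k`
in one heap iff it does in the other, as long as that column meets the two blocking clusters in
matching positions.

Under this coupling the configurations of the pieces blocking `x₁` and `x₂` stay isomorphic. The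
cluster (with its marked piece) determines, for each column it meets, whether that column's top
is higher than its neighbours, so the two heaps annihilate matched tops together; a piece
dropped next to the cluster joins both clusters in matching positions; a draw far from the
cluster changes neither. Hence `x₁` and `x₂` are annihilated at the same step, and while no draw
falls in column 0 the roof meets column 0 exactly when the cluster is empty, simultaneously in
both heaps.

The coupling map on draw sequences is non-anticipating and, with the roles of the heaps swapped,
its own inverse. It therefore permutes the equally likely prefixes of each length, so it
preserves the probability of every event determined by finitely many draws; the backtracking
event is an increasing union of such events.
-/

namespace RandomHeap

variable {m : ℕ}

/-! ### Events determined by finitely many uniform draws -/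

section Prefix

variable {α : Type*} {n : ℕ} {Q : (ℕ → α) → Prop} {T : (ℕ → α) → ℕ → α}

def DeterminedByPrefix (n : ℕ) (Q : (ℕ → α) → Prop) : Prop :=
  ∀ u v : ℕ → α, (∀ i < n, u i = v i) → (Q u ↔ Q v)

def Nonanticipating (T : (ℕ → α) → ℕ → α) : Prop :=
  ∀ n (u v : ℕ → α), (∀ i < n, u i = v i) → ∀ i < n, T u i = T v i

lemma DeterminedByPrefix.mono {n' : ℕ} (hQ : DeterminedByPrefix n Q) (hn : n ≤ n') :
    DeterminedByPrefix n' Q := fun u v h => hQ u v fun i hi => h i (hi.trans_le hn)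

lemma DeterminedByPrefix.comp (hQ : DeterminedByPrefix n Q) (hT : Nonanticipating T) :
    DeterminedByPrefix n fun u => Q (T u) := fun u v h => hQ _ _ (hT n u v h)

def prefixExtend [Inhabited α] (v : Fin n → α) (i : ℕ) : α :=
  if h : i < n then v ⟨i, h⟩ else default

lemma prefixExtend_apply [Inhabited α] (v : Fin n → α) {i : ℕ} (h : i < n) :
    prefixExtend v i = v ⟨i, h⟩ := dif_pos h

variable [MeasurableSpace α] [MeasurableSingletonClass α]
  {Ω : Type*} [MeasurableSpace Ω] {P : Measure Ω} {U : ℕ → Ω → α} {c : ℝ≥0∞}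

lemma measure_prefix_eq (hind : iIndepFun U P)
    (hunif : ∀ n a, P {ω | U n ω = a} = c) (v : ℕ → α) :
    P {ω | ∀ i < n, U i ω = v i} = c ^ n := by
  have hset : {ω | ∀ i < n, U i ω = v i} = ⋂ i ∈ Finset.range n, U i ⁻¹' {v i} := by
    ext ω
    simp
  rw [hset, hind.measure_inter_preimage_eq_mul _ fun i _ => measurableSet_singleton (v i)]
  exact (Finset.prod_congr rfl fun i _ => hunif i (v i)).trans (by simp)

variable [Countable α] [Inhabited α]

lemma measure_determinedByPrefix (hmeas : ∀ n, Measurable (U n))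
    (hind : iIndepFun U P) (hunif : ∀ n a, P {ω | U n ω = a} = c)
    (hQ : DeterminedByPrefix n Q) :
    P {ω | Q fun i => U i ω} = ∑' _ : {v : Fin n → α | Q (prefixExtend v)}, c ^ n := by
  have hset : {ω | Q fun i => U i ω} =
      ⋃ v ∈ {v : Fin n → α | Q (prefixExtend v)}, {ω | ∀ i : Fin n, U i ω = v i} := by
    ext ω
    simp only [Set.mem_ofPred_eq, Set.mem_iUnion, exists_prop]
    refine ⟨fun h => ⟨fun i => U i ω, (hQ _ _ fun i hi => ?_).1 h, fun _ => rfl⟩,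
      fun ⟨v, hv, hω⟩ => (hQ _ _ fun i hi => ?_).2 hv⟩
    · rw [prefixExtend_apply _ hi]
    · rw [prefixExtend_apply _ hi]
      exact hω ⟨i, hi⟩
  rw [hset, measure_biUnion (Set.to_countable _)]
  · refine tsum_congr fun v => ?_
    rw [← measure_prefix_eq (n := n) hind hunif (prefixExtend v.1)]
    congr 1
    ext ω
    exact ⟨fun h i hi => (h ⟨i, hi⟩).trans (prefixExtend_apply _ hi).symm,
      fun h i => (h i i.2).trans (prefixExtend_apply _ i.2)⟩
  · intro v _ w _ hvw
    exact Set.disjoint_left.2 fun ω hv hw => hvw (funext fun i => (hv i).symm.trans (hw i))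
  · intro v _
    simp only [Set.ofPred_forall]
    exact MeasurableSet.iInter fun i => hmeas i (measurableSet_singleton (v i))

lemma measure_comp_eq_of_nonanticipating (hmeas : ∀ n, Measurable (U n)) (hind : iIndepFun U P)
    (hunif : ∀ n a, P {ω | U n ω = a} = c) (T : (ℕ → α) ≃ (ℕ → α)) (hT : Nonanticipating T)
    (hT' : Nonanticipating T.symm) (hQ : DeterminedByPrefix n Q) :
    P {ω | Q (T fun i => U i ω)} = P {ω | Q fun i => U i ω} := by
  have hext : ∀ u : ℕ → α, ∀ i < n, prefixExtend (fun j : Fin n => u j) i = u i :=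
    fun u i hi => prefixExtend_apply _ hi
  let e : {v : Fin n → α | Q (T (prefixExtend v))} ≃ {v : Fin n → α | Q (prefixExtend v)} :=
    { toFun := fun v => ⟨fun i => T (prefixExtend v.1) i, (hQ _ _ (hext _)).2 v.2⟩
      invFun := fun w => ⟨fun i => T.symm (prefixExtend w.1) i,
        ((hQ.comp hT) _ _ (hext _)).2 (by
          change Q (T (T.symm _)); rw [Equiv.apply_symm_apply]; exact w.2)⟩
      left_inv := fun v => Subtype.ext <| funext fun i => by
        show T.symm (prefixExtend fun j : Fin n => T (prefixExtend v.1) j) i = v.1 i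
        rw [hT' n _ _ (hext _) i i.2, Equiv.symm_apply_apply, prefixExtend_apply _ i.2]
      right_inv := fun w => Subtype.ext <| funext fun i => by
        show T (prefixExtend fun j : Fin n => T.symm (prefixExtend w.1) j) i = w.1 i
        rw [hT n _ _ (hext _) i i.2, Equiv.apply_symm_apply, prefixExtend_apply _ i.2] }
  rw [measure_determinedByPrefix hmeas hind hunif (hQ.comp hT),
    measure_determinedByPrefix hmeas hind hunif hQ]
  exact e.tsum_eq fun _ => c ^ n

lemma measure_exists_comp_eq_of_nonanticipating (hmeas : ∀ n, Measurable (U n))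
    (hind : iIndepFun U P) (hunif : ∀ n a, P {ω | U n ω = a} = c) (T : (ℕ → α) ≃ (ℕ → α))
    (hT : Nonanticipating T) (hT' : Nonanticipating T.symm) {A : ℕ → (ℕ → α) → Prop} {N : ℕ → ℕ}
    (hA : ∀ n, DeterminedByPrefix (N n) (A n)) :
    P {ω | ∃ n, A n (T fun i => U i ω)} = P {ω | ∃ n, A n fun i => U i ω} := by
  have hunion : ∀ f : Ω → ℕ → α, {ω | ∃ n, A n (f ω)} = ⋃ K, {ω | ∃ n ≤ K, A n (f ω)} :=
    fun f => Set.ext fun ω => by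
      simp only [Set.mem_ofPred_eq, Set.mem_iUnion]
      exact ⟨fun ⟨n, h⟩ => ⟨n, n, le_rfl, h⟩, fun ⟨_, n, _, h⟩ => ⟨n, h⟩⟩
  have hmono : ∀ f : Ω → ℕ → α, Monotone fun K => {ω | ∃ n ≤ K, A n (f ω)} :=
    fun f _ _ hK _ ⟨n, hn, h⟩ => ⟨n, hn.trans hK, h⟩
  have hdet : ∀ K, DeterminedByPrefix ((Finset.range (K + 1)).sup N) fun u => ∃ n ≤ K, A n u :=
    fun K u v h => exists_congr fun n => and_congr_right fun hn =>
      (hA n).mono (Finset.le_sup (Finset.mem_range.2 (Nat.lt_succ_of_le hn))) u v h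
  rw [hunion, hunion, (hmono _).measure_iUnion, (hmono _).measure_iUnion]
  exact iSup_congr fun K => measure_comp_eq_of_nonanticipating hmeas hind hunif T hT hT' (hdet K)

end Prefix

/-! ### Heaps and their dynamics -/

section Heaps

variable {H : Finset (Piece m)} {a p q x y z : Piece m} {j k : ZMod m} {s : Bool}

def Near (a b : ZMod m) : Prop := a = b - 1 ∨ a = b ∨ a = b + 1

lemma Piece.mk_eq_iff {h : ℕ} {c : ZMod m} {σ : Bool} :
    (⟨h, c, σ⟩ : Piece m) = p ↔ h = p.height ∧ c = p.col ∧ σ = p.sign := by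
  cases p
  simp

lemma Near.refl (a : ZMod m) : Near a a := Or.inr (Or.inl rfl)

lemma Near.symm {a b : ZMod m} (h : Near a b) : Near b a := by
  rcases h with rfl | rfl | rfl
  · exact Or.inr (Or.inr (sub_add_cancel b 1).symm)
  · exact Near.refl _
  · exact Or.inl (add_sub_cancel_right b 1).symm

lemma Near.eq_or_adj {a b : ZMod m} (h : Near a b) (hab : a ≠ b) : a = b - 1 ∨ a = b + 1 :=
  h.imp_right fun h' => h'.resolve_left hab

lemma Blocks.mem_left (h : Blocks H y z) : y ∈ H := by
  obtain ⟨b, hb, -⟩ := Relation.TransGen.head'_iff.1 h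
  exact hb.1

lemma Blocks.height_lt (h : Blocks H y z) : z.height < y.height := by
  induction h with
  | single c => exact c.2.2.1
  | tail _ c ih => exact c.2.2.1.trans ih

lemma not_blocks_self : ¬ Blocks H y y := fun h => h.height_lt.false

lemma le_colHeight (hp : p ∈ H) : p.height ≤ colHeight H p.col :=
  Finset.le_sup (Finset.mem_filter.2 ⟨hp, rfl⟩)

lemma exists_top (h : colHeight H k ≠ 0) : ∃ p ∈ H, p.col = k ∧ p.height = colHeight H k := by
  have hne : (H.filter fun p => p.col = k).Nonempty :=
    Finset.nonempty_iff_ne_empty.2 fun he => h (by rw [colHeight, he]; rfl)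
  obtain ⟨p, hp, hph⟩ := Finset.exists_mem_eq_sup _ hne Piece.height
  exact ⟨p, (Finset.mem_filter.1 hp).1, (Finset.mem_filter.1 hp).2, hph.symm⟩

lemma colHeight_lt {n : ℕ} (hn : 0 < n) (h : ∀ p ∈ H, p.col = k → p.height < n) :
    colHeight H k < n :=
  (Finset.sup_lt_iff hn).2 fun p hp => h p (Finset.mem_filter.1 hp).1 (Finset.mem_filter.1 hp).2

lemma colHeight_le {n : ℕ} (h : ∀ p ∈ H, p.col = k → p.height ≤ n) : colHeight H k ≤ n :=
  Finset.sup_le fun p hp => h p (Finset.mem_filter.1 hp).1 (Finset.mem_filter.1 hp).2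

lemma mem_roof_iff : p ∈ roof H ↔ p ∈ H ∧ ∀ q, ¬ Covers H q p := by
  rw [roof, Finset.mem_filter]
  refine and_congr_right fun hp => ⟨fun h q hc => ?_, fun h q hq hn => ?_⟩
  · exact hc.2.2.1.not_ge (h q hc.1 hc.2.2.2)
  · exact not_lt.1 fun hlt => h q ⟨hq, hp, hlt, hn⟩

namespace IsHeap

lemma one_le_height (hH : IsHeap H) (hp : p ∈ H) : 1 ≤ p.height := hH.1 p hp

lemma eq_of_height_eq (hH : IsHeap H) (hp : p ∈ H) (hq : q ∈ H) (hh : p.height = q.height)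
    (hc : p.col = q.col) : p = q :=
  hH.2.2.2.2 p hp q hq hh hc

lemma height_ne_of_adj (hH : IsHeap H) (hp : p ∈ H) (hq : q ∈ H)
    (h : p.col = q.col - 1 ∨ p.col = q.col + 1) : p.height ≠ q.height := by
  rcases h with h | h
  · exact hH.2.2.2.1 p hp q hq (by rw [h, sub_add_cancel])
  · exact (hH.2.2.2.1 q hq p hp h).symm

lemma one_ne_zero (hH : IsHeap H) (hp : p ∈ H) : (1 : ZMod m) ≠ 0 := fun h =>
  hH.2.2.2.1 p hp p hp (by rw [h, add_zero]) rfl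

end IsHeap

def IsPeak (H : Finset (Piece m)) (k : ZMod m) : Prop :=
  max (colHeight H (k - 1)) (colHeight H (k + 1)) < colHeight H k

lemma IsPeak.height_le (hk : IsPeak H k) (hp : p ∈ H) (hn : Near p.col k) :
    p.height ≤ colHeight H k := by
  have hle := le_colHeight hp
  have hk' := max_lt_iff.1 hk
  rcases hn with h | h | h <;> rw [h] at hle <;> omega

lemma IsPeak.colHeight_lt (hk : IsPeak H k) (hj : Near j k) (hjk : j ≠ k) :
    colHeight H j < colHeight H k := by
  have hk' := max_lt_iff.1 hk
  rcases hj.eq_or_adj hjk with rfl | rfl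
  exacts [hk'.1, hk'.2]

lemma not_covers_of_isPeak (hk : IsPeak H a.col) (ha : a.height = colHeight H a.col) :
    ∀ q, ¬ Covers H q a := fun _ hq =>
  (hk.height_le hq.1 hq.2.2.2).not_gt (ha ▸ hq.2.2.1)

lemma IsHeap.isPeak_of_le (hH : IsHeap H) (hq : q ∈ H)
    (hle : ∀ p ∈ H, Near p.col q.col → p.height ≤ q.height) : IsPeak H q.col := by
  have htop : colHeight H q.col = q.height :=
    le_antisymm (colHeight_le fun p hp hpc => hle p hp (hpc ▸ Near.refl _)) (le_colHeight hq)
  have hlt : ∀ j, (j = q.col - 1 ∨ j = q.col + 1) → colHeight H j < q.height := by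
    intro j hj
    refine colHeight_lt (hH.one_le_height hq) fun p hp hpc => ?_
    have hadj : p.col = q.col - 1 ∨ p.col = q.col + 1 := hpc ▸ hj
    exact lt_of_le_of_ne (hle p hp (hadj.elim Or.inl (Or.inr ∘ Or.inr)))
      (hH.height_ne_of_adj hp hq hadj)
  rw [IsPeak, htop]
  exact max_lt (hlt _ (Or.inl rfl)) (hlt _ (Or.inr rfl))

def Annihilates (H : Finset (Piece m)) (k : ZMod m) (s : Bool) : Prop :=
  IsPeak H k ∧ (⟨colHeight H k, k, !s⟩ : Piece m) ∈ H

def fallingPiece (H : Finset (Piece m)) (k : ZMod m) (s : Bool) : Piece m :=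
  ⟨max (colHeight H k) (max (colHeight H (k - 1)) (colHeight H (k + 1))) + 1, k, s⟩

lemma step_of_annihilates (h : Annihilates H k s) :
    step H (k, s) = H.erase ⟨colHeight H k, k, !s⟩ := by
  rw [step]
  exact if_pos h

lemma step_of_not_annihilates (h : ¬ Annihilates H k s) :
    step H (k, s) = insert (fallingPiece H k s) H := by
  rw [step]
  exact if_neg h

lemma mem_step_iff_of_col_ne (h : p.col ≠ k) : p ∈ step H (k, s) ↔ p ∈ H := by
  by_cases hA : Annihilates H k s
  · rw [step_of_annihilates hA, Finset.mem_erase, and_iff_right_iff_imp]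
    exact fun _ he => h (he ▸ rfl)
  · rw [step_of_not_annihilates hA, Finset.mem_insert, or_iff_right_iff_imp]
    exact fun he => absurd (he ▸ rfl) h

lemma IsHeap.step_eq_erase (hH : IsHeap H) (hA : Annihilates H a.col s) (ha : a ∈ H)
    (hah : a.height = colHeight H a.col) : step H (a.col, s) = H.erase a := by
  rw [step_of_annihilates hA, hH.eq_of_height_eq hA.2 ha hah.symm rfl]

lemma height_lt_fallingPiece (hp : p ∈ H) (hn : Near p.col k) :
    p.height < (fallingPiece H k s).height := by
  have hle := le_colHeight hp
  simp only [fallingPiece]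
  rcases hn with h | h | h <;> rw [h] at hle <;> omega

lemma fallingPiece_notMem : fallingPiece H k s ∉ H := fun h =>
  (height_lt_fallingPiece h (Near.refl _)).false

lemma exists_support_fallingPiece (h : 1 < (fallingPiece H k s).height) :
    ∃ q ∈ H, q.height + 1 = (fallingPiece H k s).height ∧ Near q.col k := by
  obtain ⟨j, hj, hjM⟩ : ∃ j, Near j k ∧
      colHeight H j = max (colHeight H k) (max (colHeight H (k - 1)) (colHeight H (k + 1))) := by
    rcases max_choice (colHeight H k) (max (colHeight H (k - 1)) (colHeight H (k + 1))) with h | h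
    · exact ⟨k, Near.refl k, h.symm⟩
    · rcases max_choice (colHeight H (k - 1)) (colHeight H (k + 1)) with h' | h'
      · exact ⟨k - 1, Or.inl rfl, (h.trans h').symm⟩
      · exact ⟨k + 1, Or.inr (Or.inr rfl), (h.trans h').symm⟩
  have hpos : colHeight H j ≠ 0 := by simp only [fallingPiece] at h; omega
  obtain ⟨q, hq, hqc, hqh⟩ := exists_top hpos
  exact ⟨q, hq, by rw [hqh, hjM]; rfl, hqc ▸ hj⟩

lemma isHeap_insert (hH : IsHeap H) (hone : (1 : ZMod m) ≠ 0) (hpos : 1 ≤ a.height)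
    (hlt : ∀ p ∈ H, Near p.col a.col → p.height < a.height)
    (hsupp : 1 < a.height → ∃ q ∈ H, q.height + 1 = a.height ∧ Near q.col a.col)
    (hsign : ∀ q ∈ H, q.height + 1 = a.height → q.col = a.col → a.sign = q.sign) :
    IsHeap (insert a H) := by
  obtain ⟨h1, h2, h3, h4, h5⟩ := hH
  refine ⟨?_, ?_, ?_, ?_, ?_⟩
  · intro p hp
    rcases Finset.mem_insert.1 hp with rfl | hpH
    exacts [hpos, h1 p hpH]
  · intro p hp hp1
    obtain ⟨q, hq, hqh, hqc⟩ := (Finset.mem_insert.1 hp).elim (fun he => he ▸ hsupp (he ▸ hp1))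
      (fun hpH => h2 p hpH hp1)
    exact ⟨q, Finset.mem_insert_of_mem hq, hqh, hqc⟩
  · intro p hp q hq hh hc
    rcases Finset.mem_insert.1 hp with rfl | hpH <;> rcases Finset.mem_insert.1 hq with rfl | hqH
    · rfl
    · exact hsign q hqH hh.symm hc.symm
    · have := hlt p hpH (hc ▸ Near.refl _)
      omega
    · exact h3 p hpH q hqH hh hc
  · intro p hp q hq hc
    rcases Finset.mem_insert.1 hp with rfl | hpH <;> rcases Finset.mem_insert.1 hq with rfl | hqH
    · exact absurd (left_eq_add.1 hc) hone
    · exact (hlt q hqH (Or.inr (Or.inr hc))).ne'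
    · exact (hlt p hpH (Or.inl (eq_sub_of_add_eq hc.symm))).ne
    · exact h4 p hpH q hqH hc
  · intro p hp q hq hh hc
    rcases Finset.mem_insert.1 hp with rfl | hpH <;> rcases Finset.mem_insert.1 hq with rfl | hqH
    · rfl
    · exact absurd hh (hlt q hqH (hc ▸ Near.refl _)).ne'
    · exact absurd hh (hlt p hpH (hc ▸ Near.refl _)).ne
    · exact h5 p hpH q hqH hh hc

lemma isHeap_insert_fallingPiece (hH : IsHeap H) (hone : (1 : ZMod m) ≠ 0)
    (h : ¬ Annihilates H k s) : IsHeap (insert (fallingPiece H k s) H) := by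
  refine isHeap_insert hH hone (Nat.le_add_left 1 _) (fun p hp hn => height_lt_fallingPiece hp hn)
    exists_support_fallingPiece fun q hq hqh (hqc : q.col = k) => ?_
  change s = q.sign
  -- a piece of the opposite sign right below would be a removable top, so `h` would fail
  by_contra hs
  have hle : ∀ p ∈ H, Near p.col q.col → p.height ≤ q.height := fun p hp hn => by
    have : p.height < q.height + 1 := hqh ▸ height_lt_fallingPiece hp (hqc ▸ hn)
    omega
  have htop : colHeight H k = q.height := hqc ▸ le_antisymm
    (colHeight_le fun p hp hpc => hle p hp (hpc ▸ Near.refl _)) (le_colHeight hq)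
  refine h ⟨hqc ▸ hH.isPeak_of_le hq hle, ?_⟩
  rw [Piece.mk_eq_iff.2 ⟨htop, hqc.symm, ?_⟩]
  · exact hq
  · revert hs
    cases q.sign <;> cases s <;> decide

lemma isHeap_erase (hH : IsHeap H) (ha : ∀ q, ¬ Covers H q a) : IsHeap (H.erase a) := by
  obtain ⟨h1, h2, h3, h4, h5⟩ := hH
  have hsub : ∀ p ∈ H.erase a, p ∈ H := fun p => Finset.mem_of_mem_erase
  refine ⟨fun p hp => h1 p (hsub p hp), ?_, fun p hp q hq => h3 p (hsub p hp) q (hsub q hq),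
    fun p hp q hq => h4 p (hsub p hp) q (hsub q hq),
    fun p hp q hq => h5 p (hsub p hp) q (hsub q hq)⟩
  intro p hp hp1
  obtain ⟨q, hq, hqh, hqc⟩ := h2 p (hsub p hp) hp1
  refine ⟨q, Finset.mem_erase.2 ⟨?_, hq⟩, hqh, hqc⟩
  rintro rfl
  exact ha p ⟨hsub p hp, hq, by omega, Near.symm hqc⟩

lemma isHeap_step (hH : IsHeap H) (hone : (1 : ZMod m) ≠ 0) (k : ZMod m) (s : Bool) :
    IsHeap (step H (k, s)) := by
  by_cases h : Annihilates H k s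
  · rw [step_of_annihilates h]
    exact isHeap_erase hH (not_covers_of_isPeak h.1 rfl)
  · rw [step_of_not_annihilates h]
    exact isHeap_insert_fallingPiece hH hone h

/-! ### Blocking under removal and insertion of a top piece -/

lemma Blocks.mono {H₁ : Finset (Piece m)} (hsub : H ⊆ H₁) (h : Blocks H y z) : Blocks H₁ y z :=
  Relation.TransGen.mono (fun _ _ hc => ⟨hsub hc.1, hsub hc.2.1, hc.2.2⟩) _ _ h

lemma Covers.blocks_of (h : Covers H y z) (hz : Blocks H z x ∨ z = x) : Blocks H y x :=
  hz.elim (Relation.TransGen.head h) fun he => he ▸ Relation.TransGen.single h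

lemma blocksOrEq_trans (hpz : Blocks H p z ∨ p = z) (hzx : Blocks H z x ∨ z = x) :
    Blocks H p x ∨ p = x := by
  rcases hpz with hpz | rfl
  · rcases hzx with hzx | rfl
    exacts [Or.inl (hpz.trans hzx), Or.inl hpz]
  · exact hzx

lemma blocks_erase_iff (ha : ∀ q, ¬ Covers H q a) (hy : y ≠ a) :
    Blocks (H.erase a) y z ↔ Blocks H y z := by
  refine ⟨Blocks.mono (Finset.erase_subset a H), fun h => ?_⟩
  induction h using Relation.TransGen.head_induction_on with
  | single hc =>
    exact .single ⟨Finset.mem_erase.2 ⟨hy, hc.1⟩,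
      Finset.mem_erase.2 ⟨fun he => ha _ (he ▸ hc), hc.2.1⟩, hc.2.2⟩
  | @head w c hc _ ih =>
    have hc' : c ≠ a := fun he => ha w (he ▸ hc)
    exact .head ⟨Finset.mem_erase.2 ⟨hy, hc.1⟩, Finset.mem_erase.2 ⟨hc', hc.2.1⟩, hc.2.2⟩ (ih hc')

lemma not_blocks_of_not_covers (ha : ∀ q, ¬ Covers H q a) : ¬ Blocks H y a := fun h => by
  obtain ⟨b, -, hb⟩ := Relation.TransGen.tail'_iff.1 h
  exact ha b hb

lemma setOf_blocks_erase (ha : ∀ q, ¬ Covers H q a) :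
    {y | Blocks (H.erase a) y x} = {y | Blocks H y x} \ {a} := by
  ext y
  exact ⟨fun hy => ⟨Blocks.mono (Finset.erase_subset _ _) hy, (Finset.mem_erase.1 hy.mem_left).1⟩,
    fun hy => (blocks_erase_iff ha hy.2).2 hy.1⟩

lemma blocks_insert_iff (ha : a ∉ H) (hnc : ∀ q, ¬ Covers (insert a H) q a) (hy : y ≠ a) :
    Blocks (insert a H) y z ↔ Blocks H y z := by
  rw [← blocks_erase_iff hnc hy, Finset.erase_insert ha]

lemma not_covers_insert (hlt : ∀ p ∈ H, Near p.col a.col → p.height < a.height) :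
    ∀ q, ¬ Covers (insert a H) q a := by
  rintro q ⟨hq, -, hqa, hn⟩
  rcases Finset.mem_insert.1 hq with rfl | hq
  exacts [hqa.false, (hlt q hq hn).not_gt hqa]

lemma blocks_insert_self_iff (ha : a ∉ H) (hlt : ∀ p ∈ H, Near p.col a.col → p.height < a.height) :
    Blocks (insert a H) a z ↔ ∃ p ∈ H, Near a.col p.col ∧ (Blocks H p z ∨ p = z) := by
  have hnc := not_covers_insert hlt
  constructor
  · intro h
    obtain ⟨p, hc, hpz⟩ := Relation.TransGen.head'_iff.1 h
    have hpa : p ≠ a := fun he => hc.2.2.1.ne (he ▸ rfl)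
    refine ⟨p, (Finset.mem_insert.1 hc.2.1).resolve_left hpa, hc.2.2.2, ?_⟩
    rcases Relation.reflTransGen_iff_eq_or_transGen.1 hpz with rfl | hpz
    · exact Or.inr rfl
    · exact Or.inl ((blocks_insert_iff ha hnc hpa).1 hpz)
  · rintro ⟨p, hp, hn, hpz⟩
    have hc : Covers (insert a H) a p := ⟨Finset.mem_insert_self a H,
      Finset.mem_insert_of_mem hp, hlt p hp (Near.symm hn), hn⟩
    exact hc.blocks_of (hpz.imp_left (Blocks.mono (Finset.subset_insert a H)))

/-! ### Columns met by the blocking cluster -/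

def ClusterCol (H : Finset (Piece m)) (x : Piece m) (k : ZMod m) : Prop :=
  ∃ y, (Blocks H y x ∨ y = x) ∧ y.col = k

lemma setOf_blocks_insert_of_near (hlt : ∀ p ∈ H, Near p.col a.col → p.height < a.height)
    (hx : x ∈ H) (hj : ∃ j, ClusterCol H x j ∧ Near j a.col) :
    {y | Blocks (insert a H) y x} = insert a {y | Blocks H y x} := by
  have ha : a ∉ H := fun h => (hlt a h (Near.refl _)).false
  obtain ⟨j, ⟨y, hy, rfl⟩, hjM⟩ := hj
  ext v
  by_cases hv : v = a
  · subst hv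
    refine iff_of_true ((blocks_insert_self_iff ha hlt).2 ⟨y, ?_, Near.symm hjM, hy⟩)
      (Set.mem_insert _ _)
    exact hy.elim Blocks.mem_left fun he => he ▸ hx
  · rw [Set.mem_insert_iff, or_iff_right hv]
    exact blocks_insert_iff ha (not_covers_insert hlt) hv

lemma exists_top_of_clusterCol (hH : IsHeap H) (hx : x ∈ H) (hk : ClusterCol H x k) :
    ∃ a, (Blocks H a x ∨ a = x) ∧ a ∈ H ∧ a.col = k ∧ a.height = colHeight H k := by
  obtain ⟨y, hy, rfl⟩ := hk
  have hyH : y ∈ H := hy.elim Blocks.mem_left fun he => he ▸ hx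
  obtain ⟨a, ha, hac, hah⟩ := exists_top (k := y.col)
    (Nat.pos_iff_ne_zero.1 ((hH.one_le_height hyH).trans (le_colHeight hyH)))
  refine ⟨a, ?_, ha, hac, hah⟩
  rcases (le_colHeight hyH).lt_or_eq with hlt | heq
  · exact Or.inl (Covers.blocks_of ⟨ha, hyH, hah ▸ hlt, hac ▸ Near.refl _⟩ hy)
  · rwa [hH.eq_of_height_eq ha hyH (hah.trans heq.symm) hac]

lemma colHeight_lt_of_not_clusterCol (hH : IsHeap H) (hx : x ∈ H) (hk : ClusterCol H x k)
    (hj : ¬ ClusterCol H x j) (hjk : Near j k) : colHeight H j < colHeight H k := by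
  obtain ⟨b, hb, hbH, rfl, hbh⟩ := exists_top_of_clusterCol hH hx hk
  refine colHeight_lt (hH.one_le_height hbH |>.trans_eq hbh) fun p hp hpc => ?_
  have hcol : p.col ≠ b.col := fun he => hj ⟨b, hb, he ▸ hpc⟩
  rw [← hbh]
  refine lt_of_le_of_ne (not_lt.1 fun hlt => hj ⟨p, Or.inl ?_, hpc⟩)
    (hH.height_ne_of_adj hp hbH ((hpc ▸ hjk).eq_or_adj hcol))
  exact Covers.blocks_of ⟨hp, hbH, hlt, hpc ▸ hjk⟩ hb

lemma not_isPeak_of_not_clusterCol (hH : IsHeap H) (hx : x ∈ H) (hk : ¬ ClusterCol H x k)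
    (hj : ClusterCol H x j) (hjk : Near j k) : ¬ IsPeak H k := by
  intro hpeak
  obtain ⟨b, hb, hbH, rfl, hbh⟩ := exists_top_of_clusterCol hH hx hj
  have hcol : b.col ≠ k := fun he => hk (he ▸ hj)
  have hlt := hpeak.colHeight_lt hjk hcol
  obtain ⟨p, hp, hpc, hph⟩ := exists_top (H := H) (k := k) (by omega)
  exact hk ⟨p, Or.inl (Covers.blocks_of ⟨hp, hbH, by omega, hpc ▸ Near.symm hjk⟩ hb), hpc⟩

def topSign (H : Finset (Piece m)) (k : ZMod m) : Bool :=
  decide ((⟨colHeight H k, k, true⟩ : Piece m) ∈ H)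

lemma IsHeap.mk_mem_iff (hH : IsHeap H) (ha : a ∈ H) (hah : a.height = colHeight H a.col)
    {σ : Bool} : (⟨colHeight H a.col, a.col, σ⟩ : Piece m) ∈ H ↔ a.sign = σ := by
  constructor
  · intro h
    exact (Piece.mk_eq_iff.1 (hH.eq_of_height_eq h ha hah.symm rfl)).2.2.symm
  · intro h
    rwa [Piece.mk_eq_iff.2 ⟨hah.symm, rfl, h.symm⟩]

lemma IsHeap.topSign_eq (hH : IsHeap H) (ha : a ∈ H) (hah : a.height = colHeight H a.col) :
    topSign H a.col = a.sign := by
  simp [topSign, hH.mk_mem_iff ha hah]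

/-! ### The coupling invariant -/

lemma blocks_iff_colHeight_lt {b : Piece m} (ha : a ∈ H) (hb : b ∈ H)
    (hah : a.height = colHeight H a.col) (hbh : b.height = colHeight H b.col)
    (hn : Near a.col b.col) : Blocks H a b ↔ colHeight H b.col < colHeight H a.col := by
  rw [← hah, ← hbh]
  exact ⟨Blocks.height_lt, fun hlt => .single ⟨ha, hb, hlt, hn⟩⟩

structure ClusterIso (H H' : Finset (Piece m)) (x x' : Piece m) (g : Piece m → Piece m) :
    Prop where
  isHeap : IsHeap H
  isHeap' : IsHeap H'
  mem : x ∈ H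
  mem' : x' ∈ H'
  col_eq : x'.col = x.col
  map_x : g x = x'
  bijOn : Set.BijOn g {y | Blocks H y x} {y | Blocks H' y x'}
  col_map : ∀ y, Blocks H y x → (g y).col = y.col
  blocks_iff : ∀ y z, Blocks H y x → Blocks H z x → (Blocks H y z ↔ Blocks H' (g y) (g z))

namespace ClusterIso

variable {H' : Finset (Piece m)} {x' : Piece m} {g : Piece m → Piece m}

lemma mapsTo' (S : ClusterIso H H' x x' g) (hy : Blocks H y x ∨ y = x) :
    Blocks H' (g y) x' ∨ g y = x' := by
  rcases hy with hy | rfl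
  exacts [Or.inl (S.bijOn.mapsTo hy), Or.inr S.map_x]

lemma map_mem (S : ClusterIso H H' x x' g) (hy : Blocks H y x ∨ y = x) : g y ∈ H' :=
  (S.mapsTo' hy).elim Blocks.mem_left fun he => he ▸ S.mem'

lemma col_map' (S : ClusterIso H H' x x' g) (hy : Blocks H y x ∨ y = x) :
    (g y).col = y.col := by
  rcases hy with hy | rfl
  exacts [S.col_map y hy, S.map_x ▸ S.col_eq]

lemma surjOn' (S : ClusterIso H H' x x' g) {y' : Piece m} (hy : Blocks H' y' x' ∨ y' = x') :
    ∃ y, (Blocks H y x ∨ y = x) ∧ g y = y' := by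
  rcases hy with hy | rfl
  · obtain ⟨y, hyx, rfl⟩ := S.bijOn.surjOn hy
    exact ⟨y, Or.inl hyx, rfl⟩
  · exact ⟨x, Or.inr rfl, S.map_x⟩

lemma blocks_iff' (S : ClusterIso H H' x x' g) (hy : Blocks H y x ∨ y = x)
    (hz : Blocks H z x ∨ z = x) : Blocks H y z ↔ Blocks H' (g y) (g z) := by
  rcases hz with hz | rfl
  · rcases hy with hy | rfl
    · exact S.blocks_iff y z hy hz
    · rw [S.map_x]
      exact iff_of_false (fun h => (h.height_lt.trans hz.height_lt).false)
        fun h => (h.height_lt.trans (S.bijOn.mapsTo hz).height_lt).false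
  · rw [S.map_x]
    rcases hy with hy | rfl
    · exact iff_of_true hy (S.bijOn.mapsTo hy)
    · rw [S.map_x]
      exact iff_of_false not_blocks_self not_blocks_self

lemma injOn' (S : ClusterIso H H' x x' g) (hy : Blocks H y x ∨ y = x)
    (hz : Blocks H z x ∨ z = x) (he : g y = g z) : y = z := by
  rcases hy with hy | rfl <;> rcases hz with hz | rfl
  · exact S.bijOn.injOn hy hz he
  · exact absurd (he ▸ S.map_x ▸ S.bijOn.mapsTo hy) not_blocks_self
  · exact absurd (he ▸ S.map_x ▸ S.bijOn.mapsTo hz) not_blocks_self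
  · rfl

lemma blocksOrEq_iff (S : ClusterIso H H' x x' g) (hy : Blocks H y x ∨ y = x)
    (hz : Blocks H z x ∨ z = x) : (Blocks H y z ∨ y = z) ↔ (Blocks H' (g y) (g z) ∨ g y = g z) :=
  or_congr (S.blocks_iff' hy hz) ⟨congrArg g, S.injOn' hy hz⟩

lemma clusterCol_iff (S : ClusterIso H H' x x' g) : ClusterCol H x k ↔ ClusterCol H' x' k := by
  constructor
  · rintro ⟨y, hy, rfl⟩
    exact ⟨g y, S.mapsTo' hy, S.col_map' hy⟩
  · rintro ⟨y', hy', rfl⟩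
    obtain ⟨y, hy, rfl⟩ := S.surjOn' hy'
    exact ⟨y, hy, (S.col_map' hy).symm⟩

lemma map_top (S : ClusterIso H H' x x' g) (ha : Blocks H a x ∨ a = x)
    (hah : a.height = colHeight H a.col) : (g a).height = colHeight H' (g a).col := by
  have haH : a ∈ H := ha.elim Blocks.mem_left fun he => he ▸ S.mem
  have hk : ClusterCol H' x' (g a).col := S.clusterCol_iff.1 ⟨a, ha, (S.col_map' ha).symm⟩
  obtain ⟨b', hb', -, hb'c, hb'h⟩ := exists_top_of_clusterCol S.isHeap' S.mem' hk
  obtain ⟨b, hb, rfl⟩ := S.surjOn' hb'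
  have hbc : b.col = a.col := by rw [← S.col_map' hb, hb'c, S.col_map' ha]
  obtain rfl : b = a := by
    by_contra hba
    have hbH : b ∈ H := hb.elim Blocks.mem_left fun he => he ▸ S.mem
    have hlt : b.height < a.height := hah ▸ lt_of_le_of_ne (hbc ▸ le_colHeight hbH)
      fun he => hba (S.isHeap.eq_of_height_eq hbH haH (he.trans hah.symm) hbc)
    have hgab := (S.blocks_iff' ha hb).1 (.single ⟨haH, hbH, hlt, hbc ▸ Near.refl _⟩)
    exact (hgab.height_lt.trans_le ((le_colHeight (S.map_mem ha)).trans_eq hb'h.symm)).false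
  exact hb'h

lemma isPeak_iff (S : ClusterIso H H' x x' g) (hk : ClusterCol H x k) :
    IsPeak H k ↔ IsPeak H' k := by
  obtain ⟨a, ha, haH, rfl, hah⟩ := exists_top_of_clusterCol S.isHeap S.mem hk
  have hga := S.map_top ha hah
  rw [S.col_map' ha] at hga
  have key : ∀ j, Near j a.col →
      (colHeight H j < colHeight H a.col ↔ colHeight H' j < colHeight H' a.col) := by
    intro j hj
    by_cases hjc : ClusterCol H x j
    · obtain ⟨b, hb, hbH, rfl, hbh⟩ := exists_top_of_clusterCol S.isHeap S.mem hjc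
      have hgb := S.map_top hb hbh
      rw [S.col_map' hb] at hgb
      rw [← blocks_iff_colHeight_lt haH hbH hah hbh (Near.symm hj), S.blocks_iff' ha hb,
        blocks_iff_colHeight_lt (S.map_mem ha) (S.map_mem hb) (by rwa [S.col_map' ha])
          (by rwa [S.col_map' hb]) (by rw [S.col_map' ha, S.col_map' hb]; exact Near.symm hj),
        S.col_map' ha, S.col_map' hb]
    · exact iff_of_true (colHeight_lt_of_not_clusterCol S.isHeap S.mem hk hjc hj)
        (colHeight_lt_of_not_clusterCol S.isHeap' S.mem' (S.clusterCol_iff.1 hk)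
          (S.clusterCol_iff.not.1 hjc) hj)
  rw [IsPeak, IsPeak, max_lt_iff, max_lt_iff, key _ (Or.inl rfl), key _ (Or.inr (Or.inr rfl))]

lemma erase (S : ClusterIso H H' x x' g) (ha : Blocks H a x) (hnc : ∀ q, ¬ Covers H q a)
    (hnc' : ∀ q, ¬ Covers H' q (g a)) : ClusterIso (H.erase a) (H'.erase (g a)) x x' g := by
  have hga : Blocks H' (g a) x' := S.bijOn.mapsTo ha
  refine ⟨isHeap_erase S.isHeap hnc, isHeap_erase S.isHeap' hnc',
    Finset.mem_erase.2 ⟨fun he => not_blocks_self (he ▸ ha), S.mem⟩,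
    Finset.mem_erase.2 ⟨fun he => not_blocks_self (he ▸ hga), S.mem'⟩, S.col_eq, S.map_x, ?_,
    fun y hy => S.col_map y (Blocks.mono (Finset.erase_subset _ _) hy), fun y z hy hz => ?_⟩
  · rw [setOf_blocks_erase hnc, setOf_blocks_erase hnc']
    exact S.bijOn.sdiff_singleton ha
  · obtain ⟨hy, hya⟩ : y ∈ {y | Blocks H y x} \ {a} := setOf_blocks_erase hnc ▸ hy
    obtain ⟨hz, -⟩ : z ∈ {y | Blocks H y x} \ {a} := setOf_blocks_erase hnc ▸ hz
    rw [blocks_erase_iff hnc hya, blocks_erase_iff hnc' (S.bijOn.injOn.ne hy ha hya),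
      S.blocks_iff y z hy hz]

lemma blocks_insert_self_iff_map (S : ClusterIso H H' x x' g) {N N' : Piece m}
    (hN : ∀ p ∈ H, Near p.col N.col → p.height < N.height)
    (hN' : ∀ p ∈ H', Near p.col N'.col → p.height < N'.height) (hcol : N'.col = N.col)
    (hz : Blocks H z x) : Blocks (insert N H) N z ↔ Blocks (insert N' H') N' (g z) := by
  have hNH : N ∉ H := fun h => (hN N h (Near.refl _)).false
  have hNH' : N' ∉ H' := fun h => (hN' N' h (Near.refl _)).false
  rw [blocks_insert_self_iff hNH hN, blocks_insert_self_iff hNH' hN', hcol]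
  constructor
  · rintro ⟨p, hp, hn, hpz⟩
    have hpx := blocksOrEq_trans hpz (Or.inl hz)
    exact ⟨g p, S.map_mem hpx, (S.col_map' hpx).symm ▸ hn,
      (S.blocksOrEq_iff hpx (Or.inl hz)).1 hpz⟩
  · rintro ⟨p', -, hn, hpz'⟩
    obtain ⟨p, hpx, rfl⟩ := S.surjOn' (blocksOrEq_trans hpz' (Or.inl (S.bijOn.mapsTo hz)))
    exact ⟨p, hpx.elim Blocks.mem_left fun he => he ▸ S.mem, S.col_map' hpx ▸ hn,
      (S.blocksOrEq_iff hpx (Or.inl hz)).2 hpz'⟩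

lemma join (S : ClusterIso H H' x x' g) {N N' : Piece m}
    (hN : ∀ p ∈ H, Near p.col N.col → p.height < N.height)
    (hN' : ∀ p ∈ H', Near p.col N'.col → p.height < N'.height) (hcol : N'.col = N.col)
    (hj : ∃ j, ClusterCol H x j ∧ Near j N.col) (hH : IsHeap (insert N H))
    (hH' : IsHeap (insert N' H')) :
    ClusterIso (insert N H) (insert N' H') x x' (Function.update g N N') := by
  have hNH : N ∉ H := fun h => (hN N h (Near.refl _)).false
  have hNH' : N' ∉ H' := fun h => (hN' N' h (Near.refl _)).false
  have hnc := not_covers_insert hN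
  have hnc' := not_covers_insert hN'
  have hj' : ∃ j, ClusterCol H' x' j ∧ Near j N'.col :=
    hcol ▸ hj.imp fun j => And.imp_left S.clusterCol_iff.1
  have hcl := setOf_blocks_insert_of_near hN S.mem hj
  have hne : ∀ y, Blocks H y x → y ≠ N := fun y hy he => hNH (he ▸ hy.mem_left)
  have hupd : ∀ y, Blocks H y x → Function.update g N N' y = g y := fun y hy =>
    Function.update_of_ne (hne y hy) _ _
  refine ⟨hH, hH', Finset.mem_insert_of_mem S.mem, Finset.mem_insert_of_mem S.mem', S.col_eq,
    by rw [Function.update_of_ne fun he : x = N => hNH (he ▸ S.mem), S.map_x], ?_, ?_, ?_⟩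
  · rw [hcl, setOf_blocks_insert_of_near hN' S.mem' hj']
    have hb := (S.bijOn.congr fun y hy => (hupd y hy).symm).insert
      (a := N) (fun h => hNH' (by rw [Function.update_self] at h; exact h.mem_left))
    rwa [Function.update_self] at hb
  · intro y hy
    rcases (Set.ext_iff.1 hcl y).1 hy with rfl | hy
    · rw [Function.update_self, hcol]
    · rw [hupd y hy]
      exact S.col_map y hy
  · intro y z hy hz
    rcases (Set.ext_iff.1 hcl z).1 hz with rfl | hzx
    · rw [Function.update_self]
      exact iff_of_false (not_blocks_of_not_covers hnc) (not_blocks_of_not_covers hnc')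
    rcases (Set.ext_iff.1 hcl y).1 hy with rfl | hyx
    · rw [Function.update_self, hupd z hzx]
      exact S.blocks_insert_self_iff_map hN hN' hcol hzx
    · rw [hupd y hyx, hupd z hzx, blocks_insert_iff hNH hnc (hne y hyx),
        blocks_insert_iff hNH' hnc' (fun he => hNH' (he ▸ (S.bijOn.mapsTo hyx).mem_left)),
        S.blocks_iff y z hyx hzx]

end ClusterIso

lemma blocks_step_far_iff (hk : ¬ ∃ j, ClusterCol H x j ∧ Near j k)
    (hz : Blocks H z x ∨ z = x) : Blocks (step H (k, s)) y z ↔ Blocks H y z := by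
  have far : ∀ p, (Blocks H p z ∨ p = z) → Near p.col k → False := fun p hp hpk =>
    hk ⟨p.col, ⟨p, blocksOrEq_trans hp hz, rfl⟩, hpk⟩
  by_cases hA : Annihilates H k s
  · have hnc := not_covers_of_isPeak (a := ⟨colHeight H k, k, !s⟩) hA.1 rfl
    rw [step_of_annihilates hA]
    by_cases hy : y = ⟨colHeight H k, k, !s⟩
    · subst hy
      exact iff_of_false (fun h => (Finset.mem_erase.1 h.mem_left).1 rfl)
        fun h => far _ (Or.inl h) (Near.refl k)
    · exact blocks_erase_iff hnc hy
  · have hlt : ∀ p ∈ H, Near p.col (fallingPiece H k s).col →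
        p.height < (fallingPiece H k s).height := fun p hp hn => height_lt_fallingPiece hp hn
    rw [step_of_not_annihilates hA]
    by_cases hy : y = fallingPiece H k s
    · subst hy
      refine iff_of_false (fun h => ?_) fun h => fallingPiece_notMem h.mem_left
      obtain ⟨p, -, hn, hpz⟩ := (blocks_insert_self_iff fallingPiece_notMem hlt).1 h
      exact far p hpz (Near.symm hn)
    · exact blocks_insert_iff fallingPiece_notMem (not_covers_insert hlt) hy

def coupledDraw (H H' : Finset (Piece m)) (d : ZMod m × Bool) : ZMod m × Bool :=
  (d.1, d.2 ^^ topSign H d.1 ^^ topSign H' d.1)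

lemma coupledDraw_mk {H' : Finset (Piece m)} :
    coupledDraw H H' (k, s) = (k, s ^^ topSign H k ^^ topSign H' k) := rfl

namespace ClusterIso

variable {H' : Finset (Piece m)} {x' : Piece m} {g : Piece m → Piece m}

lemma step_far (S : ClusterIso H H' x x' g) (hk : ¬ ∃ j, ClusterCol H x j ∧ Near j k)
    (s s' : Bool) : ClusterIso (step H (k, s)) (step H' (k, s')) x x' g := by
  have hk' : ¬ ∃ j, ClusterCol H' x' j ∧ Near j k := fun ⟨j, hj, hjk⟩ =>
    hk ⟨j, S.clusterCol_iff.2 hj, hjk⟩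
  have hcl : ∀ y, Blocks (step H (k, s)) y x ↔ Blocks H y x := fun y =>
    blocks_step_far_iff hk (Or.inr rfl)
  have hcl' : ∀ y, Blocks (step H' (k, s')) y x' ↔ Blocks H' y x' := fun y =>
    blocks_step_far_iff hk' (Or.inr rfl)
  have hxk : ∀ {G : Finset (Piece m)} {w : Piece m}, (¬ ∃ j, ClusterCol G w j ∧ Near j k) →
      w.col ≠ k := fun hk he => hk ⟨_, ⟨_, Or.inr rfl, he⟩, Near.refl k⟩
  refine ⟨isHeap_step S.isHeap (S.isHeap.one_ne_zero S.mem) k s,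
    isHeap_step S.isHeap' (S.isHeap.one_ne_zero S.mem) k s',
    (mem_step_iff_of_col_ne (hxk hk)).2 S.mem, (mem_step_iff_of_col_ne (hxk hk')).2 S.mem',
    S.col_eq, S.map_x, ?_, fun y hy => S.col_map y ((hcl y).1 hy), fun y z hy hz => ?_⟩
  · simp only [hcl, hcl']
    exact S.bijOn
  · rw [hcl] at hy hz
    rw [blocks_step_far_iff hk (Or.inl hz), blocks_step_far_iff hk' (Or.inl (S.bijOn.mapsTo hz)),
      S.blocks_iff y z hy hz]

lemma annihilates_iff (S : ClusterIso H H' x x' g) (hk : ∃ j, ClusterCol H x j ∧ Near j k) :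
    Annihilates H k s ↔ Annihilates H' k (s ^^ topSign H k ^^ topSign H' k) := by
  by_cases hc : ClusterCol H x k
  · obtain ⟨a, ha, haH, rfl, hah⟩ := exists_top_of_clusterCol S.isHeap S.mem hc
    have hgac := S.col_map' ha
    have hgah := S.map_top ha hah
    rw [hgac] at hgah
    refine and_congr (S.isPeak_iff hc) ?_
    rw [S.isHeap.mk_mem_iff haH hah, ← hgac, S.isHeap'.mk_mem_iff (S.map_mem ha) (hgac ▸ hgah),
      S.isHeap'.topSign_eq (S.map_mem ha) (hgac ▸ hgah), hgac, S.isHeap.topSign_eq haH hah]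
    cases a.sign <;> cases (g a).sign <;> cases s <;> decide
  · obtain ⟨j, hj, hjk⟩ := hk
    exact iff_of_false (fun h => not_isPeak_of_not_clusterCol S.isHeap S.mem hc hj hjk h.1)
      fun h => not_isPeak_of_not_clusterCol S.isHeap' S.mem' (S.clusterCol_iff.not.1 hc)
        (S.clusterCol_iff.1 hj) hjk h.1

lemma coupled_step_of_annihilates (S : ClusterIso H H' x x' g)
    (hk : ∃ j, ClusterCol H x j ∧ Near j k) (hA : Annihilates H k s) :
    (∃ g', ClusterIso (step H (k, s)) (step H' (k, s ^^ topSign H k ^^ topSign H' k)) x x' g') ∨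
      (x ∉ step H (k, s) ∧ x' ∉ step H' (k, s ^^ topSign H k ^^ topSign H' k)) := by
  have hA' := (S.annihilates_iff hk).1 hA
  have hc : ClusterCol H x k := by
    by_contra hc
    obtain ⟨j, hj, hjk⟩ := hk
    exact not_isPeak_of_not_clusterCol S.isHeap S.mem hc hj hjk hA.1
  obtain ⟨a, ha, haH, rfl, hah⟩ := exists_top_of_clusterCol S.isHeap S.mem hc
  have hgac := S.col_map' ha
  have hgah : (g a).height = colHeight H' (g a).col := S.map_top ha hah
  rw [← hgac] at hA'
  have hstep : step H (a.col, s) = H.erase a := S.isHeap.step_eq_erase hA haH hah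
  have hstep' : step H' (a.col, s ^^ topSign H a.col ^^ topSign H' a.col) = H'.erase (g a) := by
    rw [← S.isHeap'.step_eq_erase hA' (S.map_mem ha) hgah, hgac]
  rw [hstep, hstep']
  rcases ha with ha | rfl
  · exact Or.inl ⟨g, S.erase ha (not_covers_of_isPeak hA.1 hah)
      (not_covers_of_isPeak hA'.1 hgah)⟩
  · exact Or.inr ⟨Finset.notMem_erase _ _, S.map_x ▸ Finset.notMem_erase _ _⟩

theorem coupled_step (S : ClusterIso H H' x x' g) (d : ZMod m × Bool) :
    (∃ g', ClusterIso (step H d) (step H' (coupledDraw H H' d)) x x' g') ∨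
      (x ∉ step H d ∧ x' ∉ step H' (coupledDraw H H' d)) := by
  obtain ⟨k, s⟩ := d
  rw [coupledDraw_mk]
  by_cases hk : ∃ j, ClusterCol H x j ∧ Near j k
  · by_cases hA : Annihilates H k s
    · exact S.coupled_step_of_annihilates hk hA
    · have hA' := (S.annihilates_iff hk).not.1 hA
      have hone := S.isHeap.one_ne_zero S.mem
      rw [step_of_not_annihilates hA, step_of_not_annihilates hA']
      exact Or.inl ⟨_, S.join (fun p hp hn => height_lt_fallingPiece hp hn)
        (fun p hp hn => height_lt_fallingPiece hp hn) rfl hk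
        (isHeap_insert_fallingPiece S.isHeap hone hA)
        (isHeap_insert_fallingPiece S.isHeap' hone hA')⟩
  · exact Or.inl ⟨g, S.step_far hk _ _⟩

lemma forall_not_blocks_iff (S : ClusterIso H H' x x' g) :
    (∀ y, ¬ Blocks H y x) ↔ ∀ y, ¬ Blocks H' y x' := by
  refine ⟨fun h y' hy' => ?_, fun h y hy => h _ (S.bijOn.mapsTo hy)⟩
  obtain ⟨y, hy, rfl⟩ := S.bijOn.surjOn hy'
  exact h y hy

end ClusterIso

lemma clusterIso_update {H' : Finset (Piece m)} {x' : Piece m} {f : Piece m → Piece m}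
    (hH : IsHeap H) (hH' : IsHeap H') (hx : x ∈ H) (hx' : x' ∈ H') (hcol : x'.col = x.col)
    (hbij : Set.BijOn f {y | Blocks H y x} {y | Blocks H' y x'})
    (hfcol : ∀ y, Blocks H y x → (f y).col = y.col)
    (hrel : ∀ y z, Blocks H y x → Blocks H z x → (Blocks H y z ↔ Blocks H' (f y) (f z))) :
    ClusterIso H H' x x' (Function.update f x x') := by
  have hupd : ∀ y, Blocks H y x → Function.update f x x' y = f y := fun y hy =>
    Function.update_of_ne (fun he => not_blocks_self (he ▸ hy)) _ _
  refine ⟨hH, hH', hx, hx', hcol, Function.update_self _ _ _,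
    hbij.congr fun y hy => (hupd y hy).symm, fun y hy => hupd y hy ▸ hfcol y hy,
    fun y z hy hz => ?_⟩
  rw [hupd y hy, hupd z hz]
  exact hrel y z hy hz

lemma hasRoofPiece0_iff (hx : x ∈ H) (hx0 : x.col = 0)
    (htop : ∀ p ∈ H, p.col = 0 → p.height ≤ x.height) :
    hasRoofPiece0 H ↔ ∀ y, ¬ Blocks H y x := by
  constructor
  · rintro ⟨p, hp, hp0⟩ y hy
    obtain ⟨b, -, hb, -, hbx, hn⟩ := Relation.TransGen.tail'_iff.1 hy
    have hpH := (mem_roof_iff.1 hp).1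
    exact (mem_roof_iff.1 hp).2 b
      ⟨hb, hpH, (htop p hpH hp0).trans_lt hbx, hp0 ▸ hx0 ▸ hn⟩
  · exact fun h => ⟨x, mem_roof_iff.2 ⟨hx, fun q hq => h q (.single hq)⟩, hx0⟩

lemma mem_walk_iff_of_col {u : ℕ → ZMod m × Bool} {n : ℕ} (hu : ∀ t < n, (u t).1 ≠ p.col) :
    p ∈ walk H u n ↔ p ∈ H := by
  induction n with
  | zero => rfl
  | succ n ih =>
    rw [walk, ← ih fun t ht => hu t (ht.trans n.lt_succ_self)]
    exact mem_step_iff_of_col_ne (hu n n.lt_succ_self).symm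

lemma height_le_of_mem_walk {u : ℕ → ZMod m × Bool} {n : ℕ} (hu : ∀ t < n, (u t).1 ≠ 0)
    (hx : x.height = colHeight H 0) (hp : p ∈ walk H u n) (hp0 : p.col = 0) :
    p.height ≤ x.height := by
  rw [mem_walk_iff_of_col (hp0 ▸ hu)] at hp
  exact hx ▸ hp0 ▸ le_colHeight hp

lemma walk_congr {u v : ℕ → ZMod m × Bool} {n : ℕ} (h : ∀ i < n, u i = v i) :
    walk H u n = walk H v n := by
  induction n with
  | zero => rfl
  | succ n ih => rw [walk, walk, ih fun i hi => h i (hi.trans n.lt_succ_self), h n n.lt_succ_self]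

def BacktrackedBy (H : Finset (Piece m)) (n : ℕ) (u : ℕ → ZMod m × Bool) : Prop :=
  hasRoofPiece0 (walk H u (n + 1)) ∧ ∀ t ≤ n, (u t).1 ≠ 0

def AnnihilatedBy (H : Finset (Piece m)) (x : Piece m) (n : ℕ) (u : ℕ → ZMod m × Bool) : Prop :=
  ∃ t ≤ n, x ∉ walk H u t

lemma determinedByPrefix_backtrackedBy (H : Finset (Piece m)) (n : ℕ) :
    DeterminedByPrefix (n + 1) (BacktrackedBy H n) := fun u v h => by
  rw [BacktrackedBy, BacktrackedBy, walk_congr h]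
  exact and_congr_right fun _ => forall₂_congr fun t ht => by rw [h t (Nat.lt_succ_of_le ht)]

lemma determinedByPrefix_annihilatedBy (H : Finset (Piece m)) (x : Piece m) (n : ℕ) :
    DeterminedByPrefix n (AnnihilatedBy H x n) := fun u v h =>
  exists_congr fun t => and_congr_right fun ht => by
    rw [walk_congr fun i hi => h i (hi.trans_le ht)]

/-! ### The coupled processes -/

section Coupling

variable {H₁ H₂ : Finset (Piece m)} {u v : ℕ → ZMod m × Bool}

noncomputable def coupledWalk (H₁ H₂ : Finset (Piece m)) (u : ℕ → ZMod m × Bool) :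
    ℕ → Finset (Piece m) × Finset (Piece m)
  | 0 => (H₁, H₂)
  | n + 1 => (step (coupledWalk H₁ H₂ u n).1 (u n),
      step (coupledWalk H₁ H₂ u n).2
        (coupledDraw (coupledWalk H₁ H₂ u n).1 (coupledWalk H₁ H₂ u n).2 (u n)))

noncomputable def couple (H₁ H₂ : Finset (Piece m)) (u : ℕ → ZMod m × Bool) (n : ℕ) :
    ZMod m × Bool :=
  coupledDraw (coupledWalk H₁ H₂ u n).1 (coupledWalk H₁ H₂ u n).2 (u n)

lemma couple_apply_fst (n : ℕ) : (couple H₁ H₂ u n).1 = (u n).1 := rfl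

lemma coupledWalk_fst (n : ℕ) : (coupledWalk H₁ H₂ u n).1 = walk H₁ u n := by
  induction n with
  | zero => rfl
  | succ n ih => rw [coupledWalk, walk, ih]

lemma coupledWalk_snd (n : ℕ) : (coupledWalk H₁ H₂ u n).2 = walk H₂ (couple H₁ H₂ u) n := by
  induction n with
  | zero => rfl
  | succ n ih => rw [coupledWalk, walk, ← ih, couple]

lemma coupledDraw_coupledDraw {H H' : Finset (Piece m)} (d : ZMod m × Bool) :
    coupledDraw H' H (coupledDraw H H' d) = d := by
  obtain ⟨k, s⟩ := d
  simp only [coupledDraw_mk, Prod.mk.injEq, true_and]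
  cases s <;> cases topSign H k <;> cases topSign H' k <;> rfl

lemma coupledWalk_swap (n : ℕ) :
    coupledWalk H₂ H₁ (couple H₁ H₂ u) n = (coupledWalk H₁ H₂ u n).swap := by
  induction n with
  | zero => rfl
  | succ n ih =>
    simp only [coupledWalk, ih, Prod.fst_swap, Prod.snd_swap, Prod.swap_prod_mk, couple,
      coupledDraw_coupledDraw]

lemma couple_couple : couple H₂ H₁ (couple H₁ H₂ u) = u := by
  funext n
  rw [couple, coupledWalk_swap, couple]
  exact coupledDraw_coupledDraw (u n)

lemma coupledWalk_congr {n : ℕ} (h : ∀ i < n, u i = v i) :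
    coupledWalk H₁ H₂ u n = coupledWalk H₁ H₂ v n := by
  induction n with
  | zero => rfl
  | succ n ih =>
    rw [coupledWalk, coupledWalk, ih fun i hi => h i (hi.trans n.lt_succ_self), h n n.lt_succ_self]

lemma couple_congr {n : ℕ} (h : ∀ i < n, u i = v i) :
    ∀ i < n, couple H₁ H₂ u i = couple H₁ H₂ v i := fun i hi => by
  rw [couple, couple, coupledWalk_congr fun j hj => h j (hj.trans hi), h i hi]

lemma nonanticipating_couple (H₁ H₂ : Finset (Piece m)) : Nonanticipating (couple H₁ H₂) :=
  fun _ _ _ h => couple_congr h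

noncomputable def coupleEquiv (H₁ H₂ : Finset (Piece m)) :
    (ℕ → ZMod m × Bool) ≃ (ℕ → ZMod m × Bool) where
  toFun := couple H₁ H₂
  invFun := couple H₂ H₁
  left_inv _ := couple_couple
  right_inv _ := couple_couple

end Coupling

namespace ClusterIso

variable {H₁ H₂ : Finset (Piece m)} {x₁ x₂ : Piece m} {g : Piece m → Piece m}

lemma walk_couple (S : ClusterIso H₁ H₂ x₁ x₂ g) (u : ℕ → ZMod m × Bool) (n : ℕ) :
    (∃ g', ClusterIso (walk H₁ u n) (walk H₂ (couple H₁ H₂ u) n) x₁ x₂ g') ∨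
      ∃ t ≤ n, x₁ ∉ walk H₁ u t ∧ x₂ ∉ walk H₂ (couple H₁ H₂ u) t := by
  have key : (∃ g', ClusterIso (coupledWalk H₁ H₂ u n).1 (coupledWalk H₁ H₂ u n).2 x₁ x₂ g') ∨
      ∃ t ≤ n, x₁ ∉ (coupledWalk H₁ H₂ u t).1 ∧ x₂ ∉ (coupledWalk H₁ H₂ u t).2 := by
    induction n with
    | zero => exact Or.inl ⟨g, S⟩
    | succ n ih =>
      rcases ih with ⟨g', S'⟩ | ⟨t, ht, h⟩
      · exact (S'.coupled_step (u n)).imp_right fun h => ⟨n + 1, le_rfl, h⟩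
      · exact Or.inr ⟨t, ht.trans n.le_succ, h⟩
  simpa only [coupledWalk_fst, coupledWalk_snd] using key

lemma annihilatedBy_iff (S : ClusterIso H₁ H₂ x₁ x₂ g) (u : ℕ → ZMod m × Bool) (n : ℕ) :
    AnnihilatedBy H₁ x₁ n u ↔ AnnihilatedBy H₂ x₂ n (couple H₁ H₂ u) := by
  constructor
  · rintro ⟨t, ht, hx⟩
    rcases S.walk_couple u t with ⟨g', S'⟩ | ⟨t', ht', -, hx'⟩
    exacts [absurd S'.mem hx, ⟨t', ht'.trans ht, hx'⟩]
  · rintro ⟨t, ht, hx⟩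
    rcases S.walk_couple u t with ⟨g', S'⟩ | ⟨t', ht', hx', -⟩
    exacts [absurd S'.mem' hx, ⟨t', ht'.trans ht, hx'⟩]

lemma backtrackedBy_iff (S : ClusterIso H₁ H₂ x₁ x₂ g) (hx₁ : x₁.col = 0)
    (htop₁ : x₁.height = colHeight H₁ 0) (htop₂ : x₂.height = colHeight H₂ 0)
    (u : ℕ → ZMod m × Bool) (n : ℕ) :
    BacktrackedBy H₁ n u ↔ BacktrackedBy H₂ n (couple H₁ H₂ u) := by
  simp only [BacktrackedBy, couple_apply_fst]
  refine and_congr_left fun h0 => ?_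
  have hu : ∀ t < n + 1, (u t).1 ≠ 0 := fun t ht => h0 t (Nat.lt_succ_iff.1 ht)
  obtain ⟨g', S'⟩ := (S.walk_couple u (n + 1)).resolve_right <| by
    rintro ⟨t, ht, hx, -⟩
    exact hx ((mem_walk_iff_of_col fun i hi => hx₁ ▸ hu i (hi.trans_le ht)).2 S.mem)
  rw [hasRoofPiece0_iff S'.mem hx₁ fun p => height_le_of_mem_walk hu htop₁,
    hasRoofPiece0_iff S'.mem' (S.col_eq.trans hx₁) fun p =>
      height_le_of_mem_walk (u := couple H₁ H₂ u) hu htop₂,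
    S'.forall_not_blocks_iff]

end ClusterIso

end Heaps

instance : Countable (ZMod m) :=
  match m with
  | 0 => inferInstanceAs (Countable ℤ)
  | _ + 1 => inferInstanceAs (Countable (Fin _))

instance : MeasurableSingletonClass (ZMod m) := ⟨fun _ => MeasurableSpace.measurableSet_top⟩

end RandomHeap

theorem blocking_configuration_invariance_general (m : ℕ)
    {Ω : Type*} [MeasurableSpace Ω] (P : Measure Ω)
    (U : ℕ → Ω → ZMod m × Bool) (hU : IIDUniformDraws P U)
    (H₁ H₂ : Finset (Piece m)) (hH₁ : IsHeap H₁) (hH₂ : IsHeap H₂)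
    (x₁ x₂ : Piece m)
    (hx₁ : x₁ ∈ H₁ ∧ x₁.col = 0 ∧ x₁.height = colHeight H₁ 0)
    (hx₂ : x₂ ∈ H₂ ∧ x₂.col = 0 ∧ x₂.height = colHeight H₂ 0)
    (f : Piece m → Piece m)
    (hbij : Set.BijOn f {y | Blocks H₁ y x₁} {y | Blocks H₂ y x₂})
    (hcol : ∀ y, Blocks H₁ y x₁ → (f y).col = y.col)
    (hrel : ∀ y z, Blocks H₁ y x₁ → Blocks H₁ z x₁ →
      (Blocks H₁ y z ↔ Blocks H₂ (f y) (f z))) :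
    (P {ω | ∃ n : ℕ, hasRoofPiece0 (walk H₁ (fun i => U i ω) (n + 1)) ∧
          ∀ t ≤ n, (U t ω).1 ≠ 0}
      = P {ω | ∃ n : ℕ, hasRoofPiece0 (walk H₂ (fun i => U i ω) (n + 1)) ∧
          ∀ t ≤ n, (U t ω).1 ≠ 0}) ∧
    ∀ n : ℕ,
      P {ω | ∃ t ≤ n, x₁ ∉ walk H₁ (fun i => U i ω) t}
        = P {ω | ∃ t ≤ n, x₂ ∉ walk H₂ (fun i => U i ω) t} := by
  obtain ⟨hx₁H, hx₁0, hx₁h⟩ := hx₁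
  obtain ⟨hx₂H, hx₂0, hx₂h⟩ := hx₂
  obtain ⟨hmeas, hind, hunif⟩ := hU
  have S := clusterIso_update hH₁ hH₂ hx₁H hx₂H (hx₂0.trans hx₁0.symm) hbij hcol hrel
  have hT : Nonanticipating (coupleEquiv H₁ H₂) := nonanticipating_couple H₁ H₂
  have hT' : Nonanticipating (coupleEquiv H₁ H₂).symm := nonanticipating_couple H₂ H₁
  constructor
  · calc P {ω | ∃ n, BacktrackedBy H₁ n fun i => U i ω}
        = P {ω | ∃ n, BacktrackedBy H₂ n (coupleEquiv H₁ H₂ fun i => U i ω)} :=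
          congrArg P <| Set.ext fun ω =>
            exists_congr fun n => S.backtrackedBy_iff hx₁0 hx₁h hx₂h _ n
      _ = P {ω | ∃ n, BacktrackedBy H₂ n fun i => U i ω} :=
          measure_exists_comp_eq_of_nonanticipating hmeas hind hunif _ hT hT'
            (determinedByPrefix_backtrackedBy H₂)
  · intro n
    calc P {ω | AnnihilatedBy H₁ x₁ n fun i => U i ω}
        = P {ω | AnnihilatedBy H₂ x₂ n (coupleEquiv H₁ H₂ fun i => U i ω)} :=
          congrArg P <| Set.ext fun ω => S.annihilatedBy_iff _ n
      _ = P {ω | AnnihilatedBy H₂ x₂ n fun i => U i ω} :=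
          measure_comp_eq_of_nonanticipating hmeas hind hunif _ hT hT'
            (determinedByPrefix_annihilatedBy H₂ x₂ n)

/-- Suppose the heaps `H₁` and `H₂` are such that the sets of pieces
blocking the highest piece of column `0` in `H₁` and in `H₂` have the same configuration,
i.e. correspond under a bijection preserving columns and the blocking relation.  Then the
probability that a run of 0's started from `H₁` backtracks equals the probability that a
run of 0's started from `H₂` backtracks, and for every future time `n` the probability
that the highest piece of column `0` has been annihilated by time `n` is the same for the
process started from `H₁` as for the process started from `H₂`.

Backtracking is the event that the run of 0's is terminated (the roof acquires a piece in
column 0) without any piece having fallen in column 0; annihilation of the marked piece by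
time `n` is the event that it has left the heap by time `n`. -/
theorem blocking_configuration_invariance (m : ℕ)
    {Ω : Type*} [MeasurableSpace Ω] (P : Measure Ω) [IsProbabilityMeasure P]
    (U : ℕ → Ω → ZMod m × Bool) (hU : IIDUniformDraws P U)
    (H₁ H₂ : Finset (Piece m)) (hH₁ : IsHeap H₁) (hH₂ : IsHeap H₂)
    (x₁ x₂ : Piece m)
    (hx₁ : x₁ ∈ H₁ ∧ x₁.col = 0 ∧ x₁.height = colHeight H₁ 0)
    (hx₂ : x₂ ∈ H₂ ∧ x₂.col = 0 ∧ x₂.height = colHeight H₂ 0)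
    (hblocked : ∃ y, Blocks H₁ y x₁)
    (f : Piece m → Piece m)
    (hbij : Set.BijOn f {y | Blocks H₁ y x₁} {y | Blocks H₂ y x₂})
    (hcol : ∀ y, Blocks H₁ y x₁ → (f y).col = y.col)
    (hrel : ∀ y z, Blocks H₁ y x₁ → Blocks H₁ z x₁ →
      (Blocks H₁ y z ↔ Blocks H₂ (f y) (f z))) :
    (P {ω | ∃ n : ℕ, hasRoofPiece0 (walk H₁ (fun i => U i ω) (n + 1)) ∧
          ∀ t ≤ n, (U t ω).1 ≠ 0}
      = P {ω | ∃ n : ℕ, hasRoofPiece0 (walk H₂ (fun i => U i ω) (n + 1)) ∧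
          ∀ t ≤ n, (U t ω).1 ≠ 0}) ∧
    ∀ n : ℕ,
      P {ω | ∃ t ≤ n, x₁ ∉ walk H₁ (fun i => U i ω) t}
        = P {ω | ∃ t ≤ n, x₂ ∉ walk H₂ (fun i => U i ω) t} :=
  blocking_configuration_invariance_general m P U hU H₁ H₂ hH₁ hH₂ x₁ x₂ hx₁ hx₂ f hbij hcol hrel
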